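/- The parameterized system P = (Q,T) with Q = {q₀,q₁,q₂,q₃,q₄} and T consisting of: ∀_LR{q₀,q₁,q₄}: q₀ → q₁; q₁ → q₂; ∀_L{q₀}: q₂ → q₃; q₃ → q₀; ∃_LR{q₂}: q₃ → q₄; q₄ → q₃, satisfies mutual exclusion for the state q₄: for every n and every configuration c ∈ Q* with q₀^n →*_P c, the word c contains at most one occurrence of the letter q₄. -/

import Mathlib

/-- Guards of conditional transition rules: `∀_I J` or `∃_I J` with `I ∈ {L, R, LR}`. -/
inductive Guard (Q : Type) : Type
  | forallL (J : Set Q)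
  | forallR (J : Set Q)
  | forallLR (J : Set Q)
  | existsL (J : Set Q)
  | existsR (J : Set Q)
  | existsLR (J : Set Q)

/-- A transition rule of a parameterized system: an optional guard, a source
local state and a target local state. -/
structure Rule (Q : Type) : Type where
  guard : Option (Guard Q)
  src : Q
  tgt : Q

/-- Satisfaction of a guard at a position whose strict left context is `u` and
strict right context is `v`. -/
def GuardSat {Q : Type} (g : Guard Q) (u v : List Q) : Prop :=
  match g with
  | .forallL J => ∀ q ∈ u, q ∈ J
  | .forallR J => ∀ q ∈ v, q ∈ J
  | .forallLR J => (∀ q ∈ u, q ∈ J) ∧ (∀ q ∈ v, q ∈ J)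
  | .existsL J => ∃ q ∈ u, q ∈ J
  | .existsR J => ∃ q ∈ v, q ∈ J
  | .existsLR J => (∃ q ∈ u, q ∈ J) ∨ (∃ q ∈ v, q ∈ J)

/-- One-step transition relation `→_P` of the parameterized system with rules `T`. -/
def Step {Q : Type} (T : Set (Rule Q)) (c c' : List Q) : Prop :=
  ∃ r ∈ T, ∃ u v : List Q,
    c = u ++ r.src :: v ∧ c' = u ++ r.tgt :: v ∧
      ∀ g, r.guard = some g → GuardSat g u v

/-- Reachability `→*_P`: the reflexive-transitive closure of `→_P`. -/
def Reach {Q : Type} (T : Set (Rule Q)) : List Q → List Q → Prop :=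
  Relation.ReflTransGen (Step T)

/-- Interpretation `[t_c]` of the closed term `t_c = c₁ * ⋯ * cₙ` (with `t_ε = e`)
in a structure with domain `M`, binary operation `mul`, constants `e` and `cq q`. -/
def wordVal {Q M : Type} (mul : M → M → M) (e : M) (cq : Q → M) : List Q → M
  | [] => e
  | [q] => cq q
  | q :: q' :: rest => mul (cq q) (wordVal mul e cq (q' :: rest))

/-- The set `J` of a universal guard (if any). -/
def univGuardSet {Q : Type} (g : Guard Q) : Option (Set Q) :=
  match g with
  | .forallL J => some J
  | .forallR J => some J
  | .forallLR J => some J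
  | _ => none

/-- The (universal closure of the) axiom of `Φ_P` corresponding to a single
transition rule, interpreted in a first-order structure with domain `M`. -/
def RuleAx {Q M : Type} (mul : M → M → M) (cq : Q → M)
    (R : M → Prop) (PJ : Set Q → M → Prop) (r : Rule Q) : Prop :=
  match r.guard with
  | none =>
      ∀ x y, R (mul (mul x (cq r.src)) y) → R (mul (mul x (cq r.tgt)) y)
  | some (.forallL J) =>
      ∀ x y, R (mul (mul x (cq r.src)) y) ∧ PJ J x → R (mul (mul x (cq r.tgt)) y)
  | some (.forallR J) =>
      ∀ x y, R (mul (mul x (cq r.src)) y) ∧ PJ J y → R (mul (mul x (cq r.tgt)) y)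
  | some (.forallLR J) =>
      ∀ x y, R (mul (mul x (cq r.src)) y) ∧ PJ J x ∧ PJ J y →
        R (mul (mul x (cq r.tgt)) y)
  | some (.existsL J) =>
      ∀ q ∈ J, ∀ x y z w,
        R (mul (mul x (cq r.src)) y) ∧ x = mul (mul z (cq q)) w →
          R (mul (mul x (cq r.tgt)) y)
  | some (.existsR J) =>
      ∀ q ∈ J, ∀ x y z w,
        R (mul (mul x (cq r.src)) y) ∧ y = mul (mul z (cq q)) w →
          R (mul (mul x (cq r.tgt)) y)
  | some (.existsLR J) =>
      ∀ q ∈ J, ∀ x y z w,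
        R (mul (mul x (cq r.src)) y) ∧
            (x = mul (mul z (cq q)) w ∨ y = mul (mul z (cq q)) w) →
          R (mul (mul x (cq r.tgt)) y)

/-- A first-order structure (domain `M`, operation `mul`, constants `e`, `cq q`,
predicates `In`, `R`, `P^J`) satisfies all formulas of the encoding `Φ_P` of the
parameterized system with rules `T` and initial local state `q0`. -/
def SatPhi {Q M : Type} (T : Set (Rule Q)) (q0 : Q)
    (mul : M → M → M) (e : M) (cq : Q → M)
    (In R : M → Prop) (PJ : Set Q → M → Prop) : Prop :=
  (∀ x y z : M, mul (mul x y) z = mul x (mul y z)) ∧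
  (∀ x : M, mul e x = x) ∧
  (∀ x : M, mul x e = x) ∧
  In e ∧
  (∀ x, In x → In (mul x (cq q0))) ∧
  (∀ x, In x → R x) ∧
  (∀ J : Set Q, (∃ r ∈ T, ∃ g, r.guard = some g ∧ univGuardSet g = some J) →
      PJ J e ∧ ∀ q ∈ J, ∀ x, PJ J x → PJ J (mul x (cq q))) ∧
  (∀ r ∈ T, RuleAx mul cq R PJ r)

/-- The local states of the second mutual exclusion system. -/
inductive St : Type
  | s0 | s1 | s2 | s3 | s4
deriving DecidableEq

/-- The transition rules: `∀_LR{q₀,q₁,q₄}: q₀ → q₁`; `q₁ → q₂`;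
`∀_L{q₀}: q₂ → q₃`; `q₃ → q₀`; `∃_LR{q₂}: q₃ → q₄`; `q₄ → q₃`. -/
def PT : Set (Rule St) :=
  { ⟨some (.forallLR {St.s0, St.s1, St.s4}), St.s0, St.s1⟩,
    ⟨none, St.s1, St.s2⟩,
    ⟨some (.forallL {St.s0}), St.s2, St.s3⟩,
    ⟨none, St.s3, St.s0⟩,
    ⟨some (.existsLR {St.s2}), St.s3, St.s4⟩,
    ⟨none, St.s4, St.s3⟩ }

/-!
Call a process *exclusive* when it is in `q₃` or `q₄`. Every reachable configuration
satisfies: either no process is exclusive, or exactly one is, every process to its left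
is in `q₀`, and if it is in `q₄` then some process to its right is in `q₂`.
While a process is exclusive the rule `q₀ → q₁` is disabled (its guard excludes `q₃`,
and `q₂`, which a process in `q₄` forces to exist), and `q₂ → q₃` can only fire at the
leftmost process not in `q₀`, which is then the exclusive one.
-/

theorem append_cons_eq_replicate_append_cons {α : Type*} {a b q : α} (hab : a ≠ b) :
    ∀ {k : ℕ} {u v w : List α}, u ++ a :: v = List.replicate k b ++ q :: w →
      (u = List.replicate k b ∧ a = q ∧ v = w) ∨
        ∃ m, u = List.replicate k b ++ q :: m ∧ w = m ++ a :: v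
  | 0, [], _, _, h => by simp_all
  | 0, x :: u, _, _, h => by
    simp only [List.replicate_zero, List.nil_append, List.cons_append, List.cons.injEq] at h
    exact .inr ⟨u, by simp [h.1], h.2.symm⟩
  | _ + 1, [], _, _, h => by simp_all [List.replicate_succ]
  | k + 1, x :: u, v, w, h => by
    simp only [List.replicate_succ, List.cons_append, List.cons.injEq] at h
    obtain ⟨rfl, h⟩ := h
    simpa [List.replicate_succ] using append_cons_eq_replicate_append_cons hab h

inductive MutexInv : List St → Prop
  | free {c : List St} : St.s3 ∉ c → St.s4 ∉ c → MutexInv c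
  | leadS3 (k : ℕ) {w : List St} : St.s3 ∉ w → St.s4 ∉ w →
      MutexInv (List.replicate k St.s0 ++ St.s3 :: w)
  | leadS4 (k : ℕ) {w : List St} : St.s3 ∉ w → St.s4 ∉ w → St.s2 ∈ w →
      MutexInv (List.replicate k St.s0 ++ St.s4 :: w)

namespace MutexInv

theorem replicate (n : ℕ) : MutexInv (List.replicate n St.s0) :=
  free (by simp [List.mem_replicate]) (by simp [List.mem_replicate])

theorem count_s4_le_one {c : List St} (h : MutexInv c) : c.count St.s4 ≤ 1 := by
  cases h with
  | free _ h4 => simp [List.count_eq_zero_of_not_mem h4]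
  | leadS3 k _ h4 | leadS4 k _ h4 _ => simp [List.count_replicate, List.count_eq_zero_of_not_mem h4]

theorem mem_s2_of_mem_s4 {c : List St} (h : MutexInv c) (h4 : St.s4 ∈ c) : St.s2 ∈ c := by
  cases h with
  | free _ h4' => exact absurd h4 h4'
  | leadS3 k _ h4' => simp_all [List.mem_replicate]
  | leadS4 k _ _ h2 => simp [h2]

theorem lead_of_exclusive {u v : List St} {a : St} (h : MutexInv (u ++ a :: v))
    (ha : a = St.s3 ∨ a = St.s4) :
    u = List.replicate u.length St.s0 ∧ St.s3 ∉ v ∧ St.s4 ∉ v ∧ (a = St.s4 → St.s2 ∈ v) := by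
  generalize hc : u ++ a :: v = c at h
  have ha0 : a ≠ St.s0 := by rcases ha with rfl | rfl <;> decide
  cases h with
  | free h3 h4 => subst hc; rcases ha with rfl | rfl <;> simp_all
  | leadS3 k h3 h4 | leadS4 k h3 h4 =>
    rcases append_cons_eq_replicate_append_cons ha0 hc with ⟨rfl, rfl, rfl⟩ | ⟨m, -, rfl⟩
    · simp_all
    · rcases ha with rfl | rfl <;> simp_all

theorem step_s0_s1 {u v : List St} (h : MutexInv (u ++ St.s0 :: v))
    (hu : ∀ x ∈ u, x ∈ ({St.s0, St.s1, St.s4} : Set St))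
    (hv : ∀ x ∈ v, x ∈ ({St.s0, St.s1, St.s4} : Set St)) :
    MutexInv (u ++ St.s1 :: v) := by
  have hc : ∀ x ∈ u ++ St.s0 :: v, x ∈ ({St.s0, St.s1, St.s4} : Set St) := by
    simp only [List.mem_append, List.mem_cons]
    rintro x (hx | rfl | hx)
    exacts [hu x hx, by simp, hv x hx]
  have h3 : St.s3 ∉ u ++ St.s0 :: v := fun h3 => by simpa using hc _ h3
  have h4 : St.s4 ∉ u ++ St.s0 :: v := fun h4 => by simpa using hc _ (h.mem_s2_of_mem_s4 h4)
  exact free (by simpa using h3) (by simpa using h4)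

theorem step_s1_s2 {u v : List St} (h : MutexInv (u ++ St.s1 :: v)) :
    MutexInv (u ++ St.s2 :: v) := by
  generalize hc : u ++ St.s1 :: v = c at h
  cases h with
  | free h3 h4 => subst hc; exact free (by simpa using h3) (by simpa using h4)
  | leadS3 k h3 h4 =>
    obtain ⟨-, h, -⟩ | ⟨m, rfl, rfl⟩ := append_cons_eq_replicate_append_cons (by decide) hc
    · cases h
    · simpa using leadS3 k (w := m ++ St.s2 :: v) (by simpa using h3) (by simpa using h4)
  | leadS4 k h3 h4 h2 =>
    obtain ⟨-, h, -⟩ | ⟨m, rfl, rfl⟩ := append_cons_eq_replicate_append_cons (by decide) hc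
    · cases h
    · simpa using leadS4 k (w := m ++ St.s2 :: v) (by simpa using h3) (by simpa using h4) (by simp)

theorem step_s2_s3 {u v : List St} (h : MutexInv (u ++ St.s2 :: v)) (hu : ∀ x ∈ u, x = St.s0) :
    MutexInv (u ++ St.s3 :: v) := by
  generalize hc : u ++ St.s2 :: v = c at h
  cases h with
  | free h3 h4 =>
    subst hc
    rw [List.eq_replicate_iff.mpr ⟨rfl, hu⟩]
    exact leadS3 _ (by simp_all) (by simp_all)
  | leadS3 k h3 h4 | leadS4 k h3 h4 =>
    obtain ⟨-, h, -⟩ | ⟨m, rfl, -⟩ := append_cons_eq_replicate_append_cons (by decide) hc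
    · cases h
    · exact absurd (hu _ (List.mem_append_right _ List.mem_cons_self)) (by decide)

theorem step_s3_s0 {u v : List St} (h : MutexInv (u ++ St.s3 :: v)) :
    MutexInv (u ++ St.s0 :: v) := by
  obtain ⟨hu, h3, h4, -⟩ := h.lead_of_exclusive (.inl rfl)
  rw [hu]
  exact free (by simp [List.mem_replicate, h3]) (by simp [List.mem_replicate, h4])

theorem step_s3_s4 {u v : List St} (h : MutexInv (u ++ St.s3 :: v)) (h2 : St.s2 ∈ u ∨ St.s2 ∈ v) :
    MutexInv (u ++ St.s4 :: v) := by
  obtain ⟨hu, h3, h4, -⟩ := h.lead_of_exclusive (.inl rfl)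
  rw [hu] at h2 ⊢
  exact leadS4 _ h3 h4 (by simpa [List.mem_replicate] using h2)

theorem step_s4_s3 {u v : List St} (h : MutexInv (u ++ St.s4 :: v)) :
    MutexInv (u ++ St.s3 :: v) := by
  obtain ⟨hu, h3, h4, -⟩ := h.lead_of_exclusive (.inr rfl)
  rw [hu]
  exact leadS3 _ h3 h4

theorem step {c c' : List St} (h : MutexInv c) (hs : Step PT c c') : MutexInv c' := by
  obtain ⟨r, hr, u, v, rfl, rfl, hg⟩ := hs
  simp only [PT, Set.mem_insert_iff, Set.mem_singleton_iff] at hr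
  rcases hr with rfl | rfl | rfl | rfl | rfl | rfl
  · exact step_s0_s1 h (hg _ rfl).1 (hg _ rfl).2
  · exact step_s1_s2 h
  · exact step_s2_s3 h (hg _ rfl)
  · exact step_s3_s0 h
  · exact step_s3_s4 h (by simpa [GuardSat] using hg _ rfl)
  · exact step_s4_s3 h

theorem of_reach {c c' : List St} (hreach : Reach PT c c') (h : MutexInv c) : MutexInv c' := by
  induction hreach with
  | refl => exact h
  | tail _ hs ih => exact ih.step hs

end MutexInv

/-- mutual exclusion for state `q₄`: every configuration
reachable from an initial configuration `q₀^n` contains at most one occurrence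
of the letter `q₄`, i.e. it is not of the form `u ++ q₄ :: v ++ q₄ :: w`. -/
theorem mutual_exclusion_q4 (n : ℕ) (c : List St)
    (hreach : Reach PT (List.replicate n St.s0) c) :
    ¬ ∃ u v w : List St, c = u ++ St.s4 :: (v ++ St.s4 :: w) := by
  rintro ⟨u, v, w, rfl⟩
  have := ((MutexInv.replicate n).of_reach hreach).count_s4_le_one
  simp only [List.count_append, List.count_cons_self] at this
  omega
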